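/- arXiv:2405.05102 — 4 statements merged into one kernel-verified Lean document; each statement's English description precedes it below -/
import Mathlib

section
/- For every integer i ≥ 2, the series Σ_{j=i+1}^∞ 1/((j−i)·(j−1)) converges and equals h_{i−1}/(i−1). -/
/-! Substituting `j = k + i + 1`, the summand becomes `(1/(k+1) - 1/(k+i)) / (i-1)`, and the series
`∑ₖ (1/(k+1) - 1/(k+i))` telescopes to `1 + 1/2 + ⋯ + 1/(i-1) = h_{i-1}`. -/

open Real Filter Topology MeasureTheory

/-- The harmonic number `h n = ∑_{i=1}^n 1/i`, with `h 0 = 0`. -/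
noncomputable def harmonic' (n : ℕ) : ℝ := ∑ i ∈ Finset.Icc 1 n, (1 : ℝ) / i

/-- One-step transition probabilities of the harmonic descent chain,
`p j i = 1/((j-i)·h_{j-1})` for `1 ≤ i < j`. -/
noncomputable def hdP (j i : ℕ) : ℝ := 1 / (((j : ℝ) - (i : ℝ)) * harmonic' (j - 1))

/-- `b 1 = 1` and `b i = 6 h_{i-1} / (π² (i-1))` for `i ≥ 2`. -/
noncomputable def hdB (i : ℕ) : ℝ :=
  if i = 1 then 1 else 6 * harmonic' (i - 1) / (Real.pi ^ 2 * ((i : ℝ) - 1))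

open Finset

/-- The terms are nonnegative, so convergence of the partial sums already gives unconditional
summability. -/
theorem Antitone.hasSum_sub_add {f : ℕ → ℝ} (hf : Antitone f) (hf0 : Tendsto f atTop (𝓝 0))
    (m : ℕ) : HasSum (fun k ↦ f k - f (k + m)) (∑ k ∈ range m, f k) := by
  rw [hasSum_iff_tendsto_nat_of_nonneg fun k ↦ sub_nonneg.2 (hf (k.le_add_right m))]
  have partial_sum (n : ℕ) : ∑ k ∈ range n, (f k - f (k + m)) =
      ∑ k ∈ range m, f k - ∑ k ∈ range m, f (n + k) := by
    have h := (sum_range_add f n m).symm.trans ((add_comm n m ▸ sum_range_add f m n))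
    simp only [sum_sub_distrib, add_comm] at h ⊢
    linarith
  have tail : Tendsto (fun n ↦ ∑ k ∈ range m, f (n + k)) atTop (𝓝 0) := by
    simpa using tendsto_finsetSum (range m) fun k _ ↦ hf0.comp (tendsto_add_atTop_nat k)
  simpa [partial_sum] using tail.const_sub (∑ k ∈ range m, f k)

theorem harmonic'_eq_sum_range (n : ℕ) :
    harmonic' n = ∑ k ∈ range n, 1 / ((k : ℝ) + 1) := by
  rw [harmonic', ← Ico_add_one_right_eq_Icc, sum_Ico_eq_sum_range]
  simp [add_comm]

theorem sum_inv_sub_mul (i : ℕ) (hi : 2 ≤ i) :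
    HasSum (fun j : ℕ => if i < j then 1 / (((j : ℝ) - i) * ((j : ℝ) - 1)) else 0)
      (harmonic' (i - 1) / ((i : ℝ) - 1)) := by
  have antitone_inv : Antitone fun k : ℕ ↦ 1 / ((k : ℝ) + 1) := fun a b hab ↦
    one_div_le_one_div_of_le (by positivity) (by gcongr)
  have telescope := (antitone_inv.hasSum_sub_add tendsto_one_div_add_atTop_nhds_zero_nat
    (i - 1)).div_const ((i : ℝ) - 1)
  rw [← harmonic'_eq_sum_range] at telescope
  rw [← hasSum_nat_add_iff' (i + 1),
    sum_eq_zero fun j hj ↦ if_neg (Nat.not_lt.2 (Nat.le_of_lt_succ (mem_range.1 hj))), sub_zero]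
  refine telescope.congr_fun fun k ↦ ?_
  rw [if_pos (by omega)]
  push_cast [Nat.cast_sub (by omega : 1 ≤ i)]
  have hi1 : (i : ℝ) - 1 ≠ 0 := sub_ne_zero.2 (by norm_cast; omega)
  rw [show (k : ℝ) + (i + 1) - i = k + 1 by ring, show (k : ℝ) + (i + 1) - 1 = k + i by ring,
    show (k : ℝ) + (i - 1) + 1 = k + i by ring]
  field_simp
  ring
end

section
/- For every integer k ≥ 1, the numbers b̂_k(j) := Σ_{m=k+1}^∞ b(m)·p(m,j), for 1 ≤ j ≤ k, form a probability distribution on {1,...,k}; that is, each series converges and Σ_{j=1}^k b̂_k(j) = 1. -/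
open Real Filter Topology MeasureTheory

/-!
For `1 ≤ j < m` the harmonic number `h_{m-1}` cancels, so `b(m) p(m,j) = (6/π²) / ((m-1)(m-j))`.
Write `S_k(m) = ∑_{j=1}^k 1/((m-1)(m-j))` for the row sums; everything reduces to
`∑_{m>k} S_k(m) = π²/6` for all `k ≥ 1`. For `k = 1` this is the Basel problem. Passing from `k`
to `k+1` adds the column `∑_{m>k+1} 1/((m-1)(m-k-1)) = ∑_{n≥1} 1/(n(n+k))`, which telescopes to
`h_k/k`, and drops the term `m = k+1`, which is `S_k(k+1) = h_k/k` as well. Each column is then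
summable, being dominated by the summable row sums.
-/

open Finset

lemma harmonic'_pos {n : ℕ} (hn : n ≠ 0) : 0 < harmonic' n :=
  sum_pos (fun _ hi => one_div_pos.2 (Nat.cast_pos.2 (mem_Icc.1 hi).1))
    (nonempty_Icc.2 (Nat.one_le_iff_ne_zero.2 hn))

theorem hasSum_sub_add_of_antitone {f : ℕ → ℝ} (hf : Antitone f)
    (hf0 : Tendsto f atTop (𝓝 0)) (k : ℕ) :
    HasSum (fun n => f n - f (n + k)) (∑ i ∈ range k, f i) := by
  rw [hasSum_iff_tendsto_nat_of_nonneg fun n => sub_nonneg.2 (hf (Nat.le_add_right n k))]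
  have hpartial (N : ℕ) : ∑ n ∈ range N, (f n - f (n + k)) =
      ∑ i ∈ range k, f i - ∑ i ∈ range k, f (N + i) := by
    have h₁ := sum_range_add f N k
    have h₂ := sum_range_add f k N
    simp only [sum_sub_distrib, add_comm _ k]
    rw [add_comm k N] at h₂
    linarith
  have htail : Tendsto (fun N => ∑ i ∈ range k, f (N + i)) atTop (𝓝 0) := by
    simpa using tendsto_finsetSum (range k) fun i _ => hf0.comp (tendsto_add_atTop_nat i)
  simpa [hpartial] using tendsto_const_nhds.sub htail

theorem hasSum_one_div_mul_add {k : ℕ} (hk : k ≠ 0) :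
    HasSum (fun n : ℕ => 1 / (((n : ℝ) + 1) * ((n : ℝ) + 1 + k)))
      ((∑ i ∈ range k, 1 / ((i : ℝ) + 1)) / k) := by
  have hanti : Antitone fun n : ℕ => 1 / ((n : ℝ) + 1) := fun _ _ hab =>
    one_div_le_one_div_of_le (by positivity) (by gcongr)
  have hk' : (k : ℝ) ≠ 0 := Nat.cast_ne_zero.2 hk
  refine ((hasSum_sub_add_of_antitone hanti tendsto_one_div_add_atTop_nhds_zero_nat k).div_const
    (k : ℝ)).congr_fun fun n => ?_
  push_cast
  field_simp
  ring

noncomputable def overshootSum (k : ℕ) (x : ℝ) : ℝ := ∑ j ∈ Icc 1 k, 1 / ((x - 1) * (x - j))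

lemma overshootSum_succ (k : ℕ) (x : ℝ) :
    overshootSum (k + 1) x = overshootSum k x + 1 / ((x - 1) * (x - (k + 1))) := by
  rw [overshootSum, sum_Icc_succ_top (by omega)]
  push_cast
  rfl

lemma overshootSum_self (k : ℕ) :
    overshootSum k (k + 1) = (∑ i ∈ range k, 1 / ((i : ℝ) + 1)) / k := by
  rw [overshootSum, ← Ico_add_one_right_eq_Icc, sum_Ico_eq_sum_range, add_tsub_cancel_right,
    ← sum_range_reflect, sum_div]
  refine sum_congr rfl fun i hi => ?_
  have hik : i + 1 ≤ k := mem_range.1 hi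
  rw [show 1 + (k - 1 - i) = k - i by omega, Nat.cast_sub (by omega), div_div]
  congr 1
  ring

theorem hasSum_overshootSum {k : ℕ} (hk : 1 ≤ k) :
    HasSum (fun n : ℕ => overshootSum k (n + k + 1)) (π ^ 2 / 6) := by
  induction k, hk using Nat.le_induction with
  | base =>
    have hbasel := (hasSum_nat_add_iff' 1).2 hasSum_zeta_two
    rw [sum_range_one, Nat.cast_zero, zero_pow two_ne_zero, div_zero, sub_zero] at hbasel
    refine hbasel.congr_fun fun n => ?_
    simp [overshootSum, sq]
  | succ k hk ih =>
    have hdrop := (hasSum_nat_add_iff' 1).2 ih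
    have hcolumn := hasSum_one_div_mul_add (Nat.one_le_iff_ne_zero.1 hk)
    rw [← overshootSum_self] at hcolumn
    have h := hdrop.add hcolumn
    rw [sum_range_one, Nat.cast_zero, zero_add, sub_add_cancel] at h
    refine h.congr_fun fun n => ?_
    rw [overshootSum_succ]
    push_cast
    ring_nf

theorem hasSum_ite_lt_iff {G : Type*} [AddCommGroup G] [TopologicalSpace G]
    [IsTopologicalAddGroup G] {g : ℕ → G} {a : G} (k : ℕ) :
    HasSum (fun m => if k < m then g m else 0) a ↔ HasSum (fun n => g (n + k + 1)) a := by
  rw [← hasSum_nat_add_iff' (k + 1), sum_eq_zero fun i hi => if_neg (by simp at hi; omega),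
    sub_zero]
  simp only [show ∀ n, k < n + (k + 1) by omega, if_true, add_assoc]

lemma hdB_mul_hdP {m j : ℕ} (hj : 1 ≤ j) (hjm : j < m) :
    hdB m * hdP m j = 6 / π ^ 2 * (1 / (((m : ℝ) - 1) * ((m : ℝ) - j))) := by
  have hm : (j : ℝ) < m := Nat.cast_lt.2 hjm
  have hj' : (1 : ℝ) ≤ j := Nat.one_le_cast.2 hj
  have hh := harmonic'_pos (n := m - 1) (by omega)
  have hm1 : (m : ℝ) - 1 ≠ 0 := by linarith
  have hmj : (m : ℝ) - j ≠ 0 := by linarith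
  rw [hdB, if_neg (by omega), hdP]
  field_simp

lemma hdB_mul_hdP_nonneg {m j : ℕ} (hj : 1 ≤ j) (hjm : j < m) : 0 ≤ hdB m * hdP m j := by
  have hm : (j : ℝ) < m := Nat.cast_lt.2 hjm
  have hj' : (1 : ℝ) ≤ j := Nat.one_le_cast.2 hj
  have hpos : 0 < ((m : ℝ) - 1) * ((m : ℝ) - j) := by apply mul_pos <;> linarith
  rw [hdB_mul_hdP hj hjm]
  positivity

theorem hasSum_sum_hdB_mul_hdP {k : ℕ} (hk : 1 ≤ k) :
    HasSum (fun m => ∑ j ∈ Icc 1 k, if k < m then hdB m * hdP m j else 0) 1 := by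
  simp only [sum_ite_irrel, sum_const_zero]
  rw [hasSum_ite_lt_iff, show (1 : ℝ) = 6 / π ^ 2 * (π ^ 2 / 6) by field_simp]
  refine ((hasSum_overshootSum hk).mul_left _).congr_fun fun n => ?_
  rw [overshootSum, mul_sum]
  refine sum_congr rfl fun j hj => ?_
  obtain ⟨hj₁, hjk⟩ := mem_Icc.1 hj
  rw [hdB_mul_hdP hj₁ (by omega)]
  push_cast
  rfl

theorem hd_overshoot_probability (k : ℕ) (hk : 1 ≤ k) :
    ∃ bhat : ℕ → ℝ,
      (∀ j : ℕ, 1 ≤ j → j ≤ k →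
        HasSum (fun m : ℕ => if k < m then hdB m * hdP m j else 0) (bhat j)) ∧
      (∀ j : ℕ, 1 ≤ j → j ≤ k → 0 ≤ bhat j) ∧
      ∑ j ∈ Finset.Icc 1 k, bhat j = 1 := by
  set col : ℕ → ℕ → ℝ := fun j m => if k < m then hdB m * hdP m j else 0
  have hnonneg (j : ℕ) (hj : j ∈ Icc 1 k) (m : ℕ) : 0 ≤ col j m := by
    simp only [col]
    split_ifs with hkm
    exacts [hdB_mul_hdP_nonneg (mem_Icc.1 hj).1 ((mem_Icc.1 hj).2.trans_lt hkm), le_rfl]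
  have htotal := hasSum_sum_hdB_mul_hdP hk
  have hsummable : ∀ j ∈ Icc 1 k, Summable (col j) := fun j hj =>
    htotal.summable.of_nonneg_of_le (hnonneg j hj) fun m =>
      single_le_sum (fun i hi => hnonneg i hi m) hj
  refine ⟨fun j => ∑' m, col j m, fun j hj₁ hjk => (hsummable j (mem_Icc.2 ⟨hj₁, hjk⟩)).hasSum,
    fun j hj₁ hjk => tsum_nonneg (hnonneg j (mem_Icc.2 ⟨hj₁, hjk⟩)), ?_⟩
  rw [← Summable.tsum_finsetSum hsummable, htotal.tsum_eq]
end

section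
/- There exist constants C₁, C₂ > 0 such that for every integer y ≥ 2 and every real a with −log(1 − 1/y) ≤ a ≤ log y, C₁·(−log(1 − e^{−a}))/log y ≤ Σ_{i=1}^{⌊e^{−a}·y⌋} p(y,i) ≤ C₂·(−log(1 − e^{−a}))/log y. -/
open Real Filter Topology MeasureTheory

/-!
With `x = e^{-a}` and `m = ⌊x y⌋`, the sum is `(∑_{i ≤ m} 1/(y - i)) / h_{y-1}`, and
`log y ≤ h_{y-1} ≤ 3 log y`. Comparing `1/t` termwise with `log ((t+1)/t)` puts the numerator
between `ℓ` and `2ℓ`, where `ℓ = log (y / (y - m))`. Finally the floor costs only a bounded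
factor: `ℓ ≤ -log (1 - x) ≤ 6ℓ`.
-/

lemma harmonic'_eq_harmonic (n : ℕ) : harmonic' n = harmonic n := by
  simp [harmonic', harmonic_eq_sum_Icc]

lemma log_le_harmonic'_sub_one {y : ℕ} (hy : 1 ≤ y) : Real.log y ≤ harmonic' (y - 1) := by
  simpa [harmonic'_eq_harmonic, Nat.sub_add_cancel hy] using log_add_one_le_harmonic (y - 1)

lemma harmonic'_sub_one_le_three_mul_log {y : ℕ} (hy : 2 ≤ y) :
    harmonic' (y - 1) ≤ 3 * Real.log y := by
  have hyR : (2 : ℝ) ≤ y := by exact_mod_cast hy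
  have h_log_sub : Real.log ((y - 1 : ℕ) : ℝ) ≤ Real.log y :=
    Real.log_le_log (Nat.cast_pos.mpr (by omega)) (Nat.cast_le.mpr (by omega))
  have h_log_two : Real.log 2 ≤ Real.log y := Real.log_le_log (by norm_num) hyR
  linarith [harmonic_le_one_add_log (y - 1), harmonic'_eq_harmonic (y - 1), Real.log_two_gt_d9]

lemma sum_Icc_hdP_eq_div (y m : ℕ) :
    ∑ i ∈ Finset.Icc 1 m, hdP y i
      = (∑ i ∈ Finset.Icc 1 m, 1 / ((y : ℝ) - i)) / harmonic' (y - 1) := by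
  rw [Finset.sum_div]
  exact Finset.sum_congr rfl fun i _ => by rw [hdP, div_div]

lemma sum_Icc_log_sub_log (y : ℝ) (m : ℕ) :
    ∑ i ∈ Finset.Icc 1 m, (Real.log (y - i + 1) - Real.log (y - i))
      = Real.log y - Real.log (y - m) := by
  induction m with
  | zero => simp
  | succ m ih =>
    rw [Finset.sum_Icc_succ_top (by omega), ih]
    push_cast
    ring_nf

lemma log_add_one_sub_log_le {t : ℝ} (ht : 0 < t) : Real.log (t + 1) - Real.log t ≤ 1 / t := by
  have h := Real.log_le_sub_one_of_pos (show 0 < (t + 1) / t by positivity)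
  rw [Real.log_div (by positivity) ht.ne'] at h
  calc _ ≤ (t + 1) / t - 1 := h
    _ = 1 / t := by field_simp; ring

lemma one_div_le_two_mul_log_add_one_sub_log {t : ℝ} (ht : 1 ≤ t) :
    1 / t ≤ 2 * (Real.log (t + 1) - Real.log t) := by
  have ht0 : 0 < t := by linarith
  have h := Real.one_sub_inv_le_log_of_pos (show 0 < (t + 1) / t by positivity)
  rw [Real.log_div (by positivity) ht0.ne', inv_div] at h
  calc 1 / t ≤ 2 * (1 - t / (t + 1)) := by
        rw [div_le_iff₀ ht0]; field_simp; linarith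
    _ ≤ _ := by linarith

lemma log_sub_log_sub_le_sum_Icc_one_div {y : ℝ} {m : ℕ} (hm : (m : ℝ) < y) :
    Real.log y - Real.log (y - m) ≤ ∑ i ∈ Finset.Icc 1 m, 1 / (y - i) := by
  rw [← sum_Icc_log_sub_log]
  refine Finset.sum_le_sum fun i hi => log_add_one_sub_log_le ?_
  have : (i : ℝ) ≤ m := by exact_mod_cast (Finset.mem_Icc.mp hi).2
  linarith

lemma sum_Icc_one_div_le_two_mul_log_sub_log_sub {y : ℝ} {m : ℕ} (hm : (m : ℝ) + 1 ≤ y) :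
    ∑ i ∈ Finset.Icc 1 m, 1 / (y - i) ≤ 2 * (Real.log y - Real.log (y - m)) := by
  rw [← sum_Icc_log_sub_log, Finset.mul_sum]
  refine Finset.sum_le_sum fun i hi => one_div_le_two_mul_log_add_one_sub_log ?_
  have : (i : ℝ) ≤ m := by exact_mod_cast (Finset.mem_Icc.mp hi).2
  linarith

lemma log_sub_log_sub_floor_le {x y : ℝ} (hx₀ : 0 ≤ x) (hx₁ : x < 1) (hy : 0 < y) :
    Real.log y - Real.log (y - ⌊x * y⌋₊) ≤ -Real.log (1 - x) := by
  have h_floor : (⌊x * y⌋₊ : ℝ) ≤ x * y := Nat.floor_le (by positivity)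
  have h_le : y * (1 - x) ≤ y - ⌊x * y⌋₊ := by linarith
  have := Real.log_le_log (by nlinarith) h_le
  rw [Real.log_mul hy.ne' (by linarith)] at this
  linarith

lemma neg_log_one_sub_le_three_mul {x : ℝ} (hx₀ : 0 ≤ x) (hx₁ : x < 1)
    (h : -Real.log (1 - x) ≤ 2) :
    -Real.log (1 - x) ≤ 3 * x := by
  have h1x : 0 < 1 - x := by linarith
  have h_log := Real.one_sub_inv_le_log_of_pos h1x
  have h_inv : 1 - (1 - x)⁻¹ = -(x / (1 - x)) := by field_simp; ring
  rw [h_inv, neg_le, le_div_iff₀ h1x] at h_log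
  nlinarith

lemma neg_log_one_sub_div_six_le {x y : ℝ} (hxy₀ : 1 ≤ x * y) (hxy₁ : x * y ≤ y - 1) :
    -Real.log (1 - x) / 6 ≤ Real.log y - Real.log (y - ⌊x * y⌋₊) := by
  set m := ⌊x * y⌋₊
  have hy : 0 < y := by nlinarith
  have hx₀ : 0 ≤ x := by nlinarith
  have hx₁ : x < 1 := by nlinarith
  have hm_le : (m : ℝ) ≤ x * y := Nat.floor_le (by positivity)
  have hm_gt : x * y < m + 1 := Nat.lt_floor_add_one _
  have hm_one : (1 : ℝ) ≤ m := by exact_mod_cast Nat.le_floor (by exact_mod_cast hxy₀)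
  have hym : 0 < y - m := by linarith
  rcases le_or_gt (-Real.log (1 - x)) 2 with hL | hL
  · -- here `-log (1 - x) ≤ 3x`, while `ℓ ≥ m / y ≥ x / 2`
    have h_log := Real.one_sub_inv_le_log_of_pos (show 0 < y / (y - m) by positivity)
    rw [Real.log_div hy.ne' hym.ne', inv_div] at h_log
    have h_frac : x / 2 ≤ 1 - (y - m) / y := by
      rw [one_sub_div hy.ne', le_div_iff₀ hy]; linarith
    linarith [neg_log_one_sub_le_three_mul hx₀ hx₁ hL]
  · -- `y - m ≤ 2y(1 - x)` costs only `log 2 < -log (1 - x) / 2`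
    have h_le : y - m ≤ 2 * (y * (1 - x)) := by linarith
    have := Real.log_le_log hym h_le
    rw [Real.log_mul two_ne_zero (by nlinarith), Real.log_mul hy.ne' (by linarith)] at this
    linarith [Real.log_two_lt_d9]

theorem hd_one_step_tail_estimate :
    ∃ C₁ C₂ : ℝ, 0 < C₁ ∧ 0 < C₂ ∧
      ∀ y : ℕ, 2 ≤ y → ∀ a : ℝ,
        -Real.log (1 - 1 / (y : ℝ)) ≤ a → a ≤ Real.log y →
          C₁ * (-Real.log (1 - Real.exp (-a))) / Real.log y
              ≤ ∑ i ∈ Finset.Icc 1 ⌊Real.exp (-a) * (y : ℝ)⌋₊, hdP y i ∧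
          ∑ i ∈ Finset.Icc 1 ⌊Real.exp (-a) * (y : ℝ)⌋₊, hdP y i
              ≤ C₂ * (-Real.log (1 - Real.exp (-a))) / Real.log y := by
  refine ⟨1 / 18, 2, by norm_num, by norm_num, fun y hy a ha₁ ha₂ => ?_⟩
  set x := Real.exp (-a)
  have hyR : (2 : ℝ) ≤ y := by exact_mod_cast hy
  have hxy₀ : 1 ≤ x * y := by
    have := Real.exp_le_exp.mpr (neg_le_neg ha₂)
    rw [Real.exp_neg, Real.exp_log (by positivity)] at this
    rwa [← div_le_iff₀ (by positivity), one_div]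
  have hxy₁ : x * y ≤ y - 1 := by
    have := Real.exp_le_exp.mpr (neg_le_of_neg_le ha₁)
    rw [Real.exp_log (by rw [sub_pos, div_lt_one (by positivity)]; linarith)] at this
    calc x * y ≤ (1 - 1 / y) * y := by gcongr
      _ = y - 1 := by field_simp
  have hm : (⌊x * y⌋₊ : ℝ) + 1 ≤ y := by linarith [Nat.floor_le (by positivity : 0 ≤ x * y)]
  have hlog : 0 < Real.log y := Real.log_pos (by linarith)
  have hH₁ := log_le_harmonic'_sub_one (by omega : 1 ≤ y)
  have hH₂ := harmonic'_sub_one_le_three_mul_log hy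
  have hS₁ := log_sub_log_sub_le_sum_Icc_one_div (by linarith : (⌊x * y⌋₊ : ℝ) < y)
  have hS₂ := sum_Icc_one_div_le_two_mul_log_sub_log_sub hm
  have hL₁ := neg_log_one_sub_div_six_le hxy₀ hxy₁
  have hL₂ :=
    log_sub_log_sub_floor_le (Real.exp_pos _).le (by nlinarith) (by positivity : (0 : ℝ) < y)
  rw [sum_Icc_hdP_eq_div]
  constructor
  · calc 1 / 18 * -Real.log (1 - x) / Real.log y
          = (-Real.log (1 - x) / 6) / (3 * Real.log y) := by ring
      _ ≤ _ := div_le_div₀ (by linarith) (by linarith) (by linarith) hH₂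
  · exact div_le_div₀ (by linarith) (by linarith) hlog hH₁
end

section
/- There exists a constant K < ∞ such that for every integer y ≥ 2 and every real a ≥ 0, Σ_{i=1}^{y−1} p(y,i)·max(log y − log i − a, 0) ≤ K · Σ_{i : 1 ≤ i ≤ y−1, log y − log i ≥ a} p(y,i). -/
open Real Filter Topology MeasureTheory

/-!
One can take `K = 1`. The indices `i < y` with `log y - log i ≥ a` form an initial segment
`{1, …, m}`, and `log y - a ≤ log (m + 1)`. Bounding `log (m + 1) - log i` by the harmonic tail
`∑_{k=i}^m 1/k` and exchanging the order of summation turns the left side into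
`∑_{k=1}^m (1/k) ∑_{i=1}^k p(y,i)`, which is at most `∑_{k=1}^m p(y,k)` because `p(y,·)` is
increasing on `{1, …, y - 1}`.
-/

lemma harmonic'_nonneg (n : ℕ) : 0 ≤ harmonic' n :=
  Finset.sum_nonneg fun _ _ => by positivity

lemma hdP_nonneg {y i : ℕ} (hi : i < y) : 0 ≤ hdP y i := by
  have : (i : ℝ) < y := by exact_mod_cast hi
  have := harmonic'_nonneg (y - 1)
  unfold hdP
  exact one_div_nonneg.mpr (mul_nonneg (by linarith) this)

lemma hdP_le_hdP {y i k : ℕ} (hik : i ≤ k) (hky : k < y) : hdP y i ≤ hdP y k := by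
  have hik' : (i : ℝ) ≤ k := by exact_mod_cast hik
  have hky' : (k : ℝ) < y := by exact_mod_cast hky
  unfold hdP
  rcases (harmonic'_nonneg (y - 1)).eq_or_lt with h | h
  · simp [← h]
  · exact one_div_le_one_div_of_le (by nlinarith) (by nlinarith)

lemma log_add_one_sub_log_le_inv {k : ℕ} (hk : 1 ≤ k) :
    log ((k : ℝ) + 1) - log k ≤ 1 / k := by
  have hk' : (0 : ℝ) < k := by exact_mod_cast hk
  rw [← log_div (by positivity) hk'.ne']
  calc log (((k : ℝ) + 1) / k) ≤ ((k : ℝ) + 1) / k - 1 := log_le_sub_one_of_pos (by positivity)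
    _ = 1 / k := by field_simp; ring

lemma log_add_one_sub_log_le_sum_Icc_inv {i m : ℕ} (hi : 1 ≤ i) (him : i ≤ m) :
    log ((m : ℝ) + 1) - log i ≤ ∑ k ∈ Finset.Icc i m, (1 : ℝ) / k := by
  induction m, him using Nat.le_induction with
  | base => simpa using log_add_one_sub_log_le_inv hi
  | succ n hin ih =>
    rw [Finset.sum_Icc_succ_top (by omega)]
    have := log_add_one_sub_log_le_inv (k := n + 1) (by omega)
    push_cast at this ⊢
    linarith

lemma sum_mul_log_sub_le_sum {w : ℕ → ℝ} {m : ℕ} (hw : MonotoneOn w (Set.Icc 1 m))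
    (hw₀ : ∀ i ∈ Finset.Icc 1 m, 0 ≤ w i) :
    ∑ i ∈ Finset.Icc 1 m, w i * (log ((m : ℝ) + 1) - log i) ≤ ∑ i ∈ Finset.Icc 1 m, w i := by
  have hpartial (k : ℕ) (hk : k ∈ Finset.Icc 1 m) : ∑ i ∈ Finset.Icc 1 k, w i ≤ k * w k := by
    simp only [Finset.mem_Icc] at hk
    calc ∑ i ∈ Finset.Icc 1 k, w i ≤ (Finset.Icc 1 k).card • w k :=
          Finset.sum_le_card_nsmul _ _ _ fun i hi => by
            simp only [Finset.mem_Icc] at hi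
            exact hw ⟨hi.1, by omega⟩ ⟨hk.1, hk.2⟩ hi.2
      _ = k * w k := by simp
  calc ∑ i ∈ Finset.Icc 1 m, w i * (log ((m : ℝ) + 1) - log i)
      ≤ ∑ i ∈ Finset.Icc 1 m, w i * ∑ k ∈ Finset.Icc i m, (1 : ℝ) / k := by
        gcongr with i hi
        · exact hw₀ i hi
        · simp only [Finset.mem_Icc] at hi
          exact log_add_one_sub_log_le_sum_Icc_inv hi.1 hi.2
    _ = ∑ k ∈ Finset.Icc 1 m, (∑ i ∈ Finset.Icc 1 k, w i) / k := by
        simp_rw [Finset.mul_sum, Finset.sum_div, mul_one_div]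
        exact Finset.sum_comm' fun i k => by simp only [Finset.mem_Icc]; omega
    _ ≤ ∑ k ∈ Finset.Icc 1 m, w k := by
        gcongr with k hk
        have hk' : (0 : ℝ) < k := by
          simp only [Finset.mem_Icc] at hk
          exact_mod_cast hk.1
        rw [div_le_iff₀ hk', mul_comm]
        exact hpartial k hk

lemma exists_filter_le_log_sub_eq_Icc {y : ℕ} (hy : 1 ≤ y) {a : ℝ} (ha : 0 ≤ a) :
    ∃ m < y, (Finset.Ico 1 y).filter (fun i : ℕ => a ≤ log y - log i) = Finset.Icc 1 m ∧
      log y - a ≤ log ((m : ℝ) + 1) := by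
  -- `x = y e^{-a}`, so for `i ≥ 1` the condition `a ≤ log y - log i` reads `i ≤ x`.
  set x := exp (log y - a)
  have hx : 0 < x := exp_pos _
  refine ⟨min ⌊x⌋₊ (y - 1), by omega, ?_, ?_⟩
  · ext i
    simp only [Finset.mem_filter, Finset.mem_Ico, Finset.mem_Icc, le_min_iff]
    constructor
    · rintro ⟨⟨hi, hiy⟩, hai⟩
      refine ⟨hi, Nat.le_floor ?_, by omega⟩
      rw [← exp_log (show (0 : ℝ) < i by exact_mod_cast hi)]
      exact exp_le_exp.mpr (by linarith)
    · rintro ⟨hi, hix, hiy⟩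
      refine ⟨⟨hi, by omega⟩, ?_⟩
      have := log_le_log (by exact_mod_cast hi) ((Nat.le_floor_iff hx.le).mp hix)
      rw [log_exp] at this
      linarith
  · rcases min_choice ⌊x⌋₊ (y - 1) with h | h <;> rw [h]
    · calc log y - a = log x := (log_exp _).symm
        _ ≤ log ((⌊x⌋₊ : ℝ) + 1) := log_le_log hx (Nat.lt_floor_add_one x).le
    · rw [show ((y - 1 : ℕ) : ℝ) + 1 = y by rw [Nat.cast_sub hy]; ring]
      linarith

theorem hd_one_step_excess_bound :
    ∃ K : ℝ, ∀ y : ℕ, 2 ≤ y → ∀ a : ℝ, 0 ≤ a →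
      ∑ i ∈ Finset.Ico 1 y, hdP y i * max (Real.log y - Real.log i - a) 0
        ≤ K * ∑ i ∈ (Finset.Ico 1 y).filter (fun i : ℕ => a ≤ Real.log y - Real.log i),
              hdP y i := by
  refine ⟨1, fun y hy a ha => ?_⟩
  obtain ⟨m, hmy, hS, hlog⟩ := exists_filter_le_log_sub_eq_Icc (by omega : 1 ≤ y) ha
  have hvanish : ∀ i ∈ Finset.Ico 1 y, hdP y i * max (log y - log i - a) 0 ≠ 0 →
      a ≤ log y - log i := fun i _ h => by
    by_contra hlt
    exact h (by rw [max_eq_right (by linarith), mul_zero])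
  rw [one_mul, ← Finset.sum_filter_of_ne hvanish, hS]
  calc ∑ i ∈ Finset.Icc 1 m, hdP y i * max (log y - log i - a) 0
      ≤ ∑ i ∈ Finset.Icc 1 m, hdP y i * (log ((m : ℝ) + 1) - log i) := by
        gcongr with i hi
        · exact hdP_nonneg (by simp only [Finset.mem_Icc] at hi; omega)
        · refine max_le (by linarith) (sub_nonneg.mpr (log_le_log ?_ ?_)) <;>
            simp only [Finset.mem_Icc] at hi
          · exact_mod_cast hi.1
          · exact_mod_cast hi.2.trans (Nat.le_succ m)
    _ ≤ ∑ i ∈ Finset.Icc 1 m, hdP y i :=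
        sum_mul_log_sub_le_sum (fun i _ k hk hik => hdP_le_hdP hik (hk.2.trans_lt hmy))
          fun i hi => hdP_nonneg (by simp only [Finset.mem_Icc] at hi; omega)
end
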